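/- Let I be a nonzero ideal of K[[X_1,…,X_n]] and N(I) ⊂ ℕ^n its diagram of initial exponents (the set of ν(g) for 0 ≠ g ∈ I, where ν(g) is the minimal exponent in the support of g with respect to the total order on ℕ^n). Then the Hilbert–Samuel function H_I(k) = dim_K K[[X]]/(I + M^{k+1}) equals the number of lattice points α ∈ ℕ^n \ N(I) with |α| ≤ k. -/

import Mathlib

/- STATEMENT 9: for a nonzero ideal `I ⊆ K[[X_1,…,X_n]]`, the Hilbert–Samuel
   function `H_I(k) = dim_K K[[X]]/(I + M^{k+1})` equals the number of lattice
   points `α ∉ N(I)` with `|α| ≤ k`, where `N(I)` is the diagram of initial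
   exponents of `I`. -/

open scoped Classical

noncomputable def deg {σ : Type} [Fintype σ] (α : σ →₀ ℕ) : ℕ := ∑ i, α i

/-- The key `(|α|, α_1, …, α_n)`; keys are compared lexicographically, which is
the total order on `ℕ^n` used for initial exponents. -/
noncomputable def fKey {n : ℕ} (α : Fin n →₀ ℕ) : List ℕ :=
  (deg α) :: List.ofFn fun i => α i

/-- `β` is the initial exponent `ν(g)` of `g ≠ 0`: the smallest element of the
support of `g` for the order above. -/
def IsInitExp {K : Type} [Field K] {n : ℕ} (g : MvPowerSeries (Fin n) K)
    (β : Fin n →₀ ℕ) : Prop :=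
  MvPowerSeries.coeff β g ≠ 0 ∧
    ∀ γ, MvPowerSeries.coeff γ g ≠ 0 → fKey β ≤ fKey γ

/-- The diagram of initial exponents `N(I)` of an ideal `I ⊆ K[[X]]`. -/
def diagOf {K : Type} [Field K] {n : ℕ} (I : Ideal (MvPowerSeries (Fin n) K)) :
    Set (Fin n →₀ ℕ) :=
  {β | ∃ g ∈ I, g ≠ 0 ∧ IsInitExp g β}

/-- The maximal ideal `(X_1,…,X_n)` of `K[[X]]`. -/
noncomputable def MxI (n : ℕ) (K : Type) [Field K] : Ideal (MvPowerSeries (Fin n) K) :=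
  Ideal.span (Set.range (MvPowerSeries.X : Fin n → MvPowerSeries (Fin n) K))

/-!
The classes of the monomials `X^α` with `α ∉ N(I)` and `|α| ≤ k` form a `K`-basis of
`K[[X]] ⧸ (I + M^{k+1})`.

`M^m` is exactly the ideal of series of order at least `m` (split a series according to the
least variable of each monomial), so the quotient is spanned by the monomials of degree `≤ k`.
If `α = ν(g)` with `g ∈ I`, then modulo `I` the monomial `X^α` is a combination of monomials
with larger exponents; downward induction on the finite set of exponents of degree `≤ k` leaves
only those outside `N(I)`.

Conversely, if a combination `f` of such monomials lies in `I + M^{k+1}`, say `f = p + q` with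
`p ∈ I`, then `p` agrees with `f` up to degree `k`, and every exponent of degree `> k` is larger
than `ν(f)`, so `ν(f) = ν(p) ∈ N(I)`, contradicting the choice of the monomials.
-/

open MvPowerSeries

theorem Set.Finite.forall_of_forall_gt {ι β : Type*} [LinearOrder β] {s : Set ι}
    (hs : s.Finite) (f : ι → β) {P : ι → Prop}
    (h : ∀ a ∈ s, (∀ b ∈ s, f a < f b → P b) → P a) : ∀ a ∈ s, P a := by
  by_contra! hbad
  obtain ⟨a, ⟨has, hPa⟩, hmax⟩ :=
    Set.exists_max_image {a | a ∈ s ∧ ¬P a} f (hs.subset fun _ ha => ha.1) hbad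
  exact hPa (h a has fun b hbs hab => by_contra fun hPb => (hmax b ⟨hbs, hPb⟩).not_gt hab)

theorem deg_eq_degree {σ : Type} [Fintype σ] (α : σ →₀ ℕ) : deg α = α.degree :=
  (Finsupp.degree_eq_sum α).symm

theorem finite_setOf_deg_le {σ : Type} [Fintype σ] (k : ℕ) : {α : σ →₀ ℕ | deg α ≤ k}.Finite := by
  simpa only [deg_eq_degree] using Finsupp.finite_of_degree_le k

theorem fKey_injective {n : ℕ} : Function.Injective (fKey (n := n)) := by
  intro α β h
  simp only [fKey, List.cons.injEq] at h
  ext i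
  simpa using congrFun (List.ofFn_injective h.2) i

theorem fKey_lt_of_deg_lt {n : ℕ} {α β : Fin n →₀ ℕ} (h : deg α < deg β) : fKey α < fKey β :=
  List.Lex.rel h

namespace MvPowerSeries

variable {σ R : Type*} [CommSemiring R]

theorem coeff_sum_smul_monomial (s : Finset (σ →₀ ℕ)) (c : (σ →₀ ℕ) → R) (β : σ →₀ ℕ) :
    coeff β (∑ α ∈ s, c α • monomial α (1 : R)) = if β ∈ s then c β else 0 := by
  classical
  simp only [map_sum, map_smul, coeff_monomial, smul_eq_mul, mul_ite, mul_one, mul_zero]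
  exact Finset.sum_ite_eq s β c

def leastVarPart [LinearOrder σ] (f : MvPowerSeries σ R) (i : σ) : MvPowerSeries σ R :=
  fun γ => if γ.support.min = i then coeff γ f else 0

theorem coeff_leastVarPart [LinearOrder σ] (f : MvPowerSeries σ R) (i : σ) (γ : σ →₀ ℕ) :
    coeff γ (leastVarPart f i) = if γ.support.min = i then coeff γ f else 0 :=
  rfl

theorem sum_leastVarPart [Fintype σ] [LinearOrder σ] {f : MvPowerSeries σ R}
    (hf : constantCoeff f = 0) : ∑ i, leastVarPart f i = f := by
  ext γ
  simp only [map_sum, coeff_leastVarPart]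
  rcases γ.support.eq_empty_or_nonempty with hγ | hγ
  · obtain rfl := Finsupp.support_eq_empty.1 hγ
    simp [hf]
  · simp [← Finset.coe_min' hγ]

theorem X_dvd_leastVarPart [LinearOrder σ] (f : MvPowerSeries σ R) (i : σ) :
    X i ∣ leastVarPart f i :=
  X_dvd_iff.2 fun γ hγ => by
    rw [coeff_leastVarPart, if_neg]
    exact fun hmin => Finsupp.mem_support_iff.1 (Finset.mem_of_min hmin) hγ

theorem exists_eq_sum_X_mul_of_le_order [Fintype σ] {m : ℕ} {f : MvPowerSeries σ R}
    (hf : ((m + 1 : ℕ) : ℕ∞) ≤ f.order) :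
    ∃ g : σ → MvPowerSeries σ R, f = ∑ i, X i * g i ∧ ∀ i, (m : ℕ∞) ≤ (g i).order := by
  let : LinearOrder σ := LinearOrder.lift' _ (Fintype.equivFin σ).injective
  choose g hg using fun i => X_dvd_leastVarPart f i
  have hf0 : constantCoeff f = 0 :=
    one_le_order_iff_constCoeff_eq_zero.1 (le_trans (by simp) hf)
  refine ⟨g, by simp only [← hg, sum_leastVarPart hf0], fun i => le_order fun d hd => ?_⟩
  have hlt : ((Finsupp.single i 1 + d : σ →₀ ℕ).degree : ℕ∞) < f.order := by
    refine lt_of_lt_of_le ?_ hf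
    rw [map_add, Finsupp.degree_single]
    exact_mod_cast (by have := Nat.cast_lt.1 hd; omega : 1 + d.degree < m + 1)
  rw [← one_mul (coeff d (g i)), ← coeff_add_monomial_mul, ← X, ← hg, coeff_leastVarPart,
    coeff_of_lt_order hlt, ite_self]

theorem mem_span_range_X_pow_iff [Fintype σ] {m : ℕ} {f : MvPowerSeries σ R} :
    f ∈ Ideal.span (Set.range X) ^ m ↔ (m : ℕ∞) ≤ f.order := by
  induction m generalizing f with
  | zero => simp
  | succ m ih =>
    constructor
    · intro hf
      have hX : Ideal.span (Set.range X) ≤ RingHom.ker (constantCoeff (σ := σ) (R := R)) :=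
        Ideal.span_le.2 (by rintro _ ⟨i, rfl⟩; simp)
      rw [pow_succ] at hf
      refine Submodule.mul_induction_on hf (fun a ha b hb => ?_)
        (fun a b ha hb => (le_min ha hb).trans min_order_le_add)
      have hb1 : 1 ≤ b.order := one_le_order_iff_constCoeff_eq_zero.2 (hX hb)
      calc ((m + 1 : ℕ) : ℕ∞) = m + 1 := by push_cast; rfl
        _ ≤ a.order + b.order := add_le_add (ih.1 ha) hb1
        _ ≤ (a * b).order := le_order_mul
    · intro hf
      obtain ⟨g, rfl, hg⟩ := exists_eq_sum_X_mul_of_le_order hf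
      rw [pow_succ']
      exact Ideal.sum_mem _ fun i _ =>
        Ideal.mul_mem_mul (Ideal.subset_span ⟨i, rfl⟩) (ih.2 (hg i))

end MvPowerSeries

section HilbertSamuel

variable {K : Type} [Field K] {n : ℕ}

theorem mem_MxI_pow_iff {m : ℕ} {f : MvPowerSeries (Fin n) K} :
    f ∈ MxI n K ^ m ↔ (m : ℕ∞) ≤ f.order :=
  mem_span_range_X_pow_iff

theorem coeff_eq_zero_of_mem_MxI_pow {k : ℕ} {f : MvPowerSeries (Fin n) K}
    (hf : f ∈ MxI n K ^ (k + 1)) {γ : Fin n →₀ ℕ} (hγ : deg γ ≤ k) : coeff γ f = 0 := by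
  refine coeff_of_lt_order (lt_of_lt_of_le ?_ (mem_MxI_pow_iff.1 hf))
  rw [← deg_eq_degree]
  exact_mod_cast Nat.lt_succ_of_le hγ

theorem mkₐ_eq_sum_coeff_smul_mkₐ_monomial {k : ℕ} {J : Ideal (MvPowerSeries (Fin n) K)}
    (hJ : MxI n K ^ (k + 1) ≤ J) (f : MvPowerSeries (Fin n) K) :
    Ideal.Quotient.mkₐ K J f = ∑ β ∈ (finite_setOf_deg_le k).toFinset,
      coeff β f • Ideal.Quotient.mkₐ K J (monomial β 1) := by
  have htail : f - ∑ β ∈ (finite_setOf_deg_le k).toFinset, coeff β f • monomial β 1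
      ∈ MxI n K ^ (k + 1) := by
    refine mem_MxI_pow_iff.2 (le_order fun d hd => ?_)
    have hd : deg d ≤ k := by rw [deg_eq_degree]; have := Nat.cast_lt.1 hd; omega
    rw [map_sub, coeff_sum_smul_monomial, if_pos (by simpa using hd), sub_self]
  have hmk := Ideal.Quotient.eq_zero_iff_mem.2 (hJ htail)
  rw [← Ideal.Quotient.mkₐ_eq_mk K, map_sub, sub_eq_zero] at hmk
  simp only [hmk, map_sum, map_smul]

theorem mem_diagOf_of_isInitExp {I : Ideal (MvPowerSeries (Fin n) K)} {k : ℕ}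
    {f : MvPowerSeries (Fin n) K} (hf : f ∈ I + MxI n K ^ (k + 1)) {β : Fin n →₀ ℕ}
    (hβ : IsInitExp f β) (hβk : deg β ≤ k) : β ∈ diagOf I := by
  obtain ⟨p, hp, q, hq, rfl⟩ := Submodule.mem_sup.1 hf
  have hcoeff : ∀ γ, deg γ ≤ k → coeff γ (p + q) = coeff γ p := fun γ hγ => by
    rw [map_add, coeff_eq_zero_of_mem_MxI_pow hq hγ, add_zero]
  have hpβ : coeff β p ≠ 0 := hcoeff β hβk ▸ hβ.1
  refine ⟨p, hp, fun hp0 => hpβ (by rw [hp0, map_zero]), hpβ, fun γ hγ => ?_⟩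
  by_cases hγk : deg γ ≤ k
  · exact hβ.2 γ (hcoeff γ hγk ▸ hγ)
  · exact (fKey_lt_of_deg_lt (by omega)).le

theorem linearIndepOn_mkₐ_monomial (I : Ideal (MvPowerSeries (Fin n) K)) (k : ℕ) :
    LinearIndepOn K (fun α => Ideal.Quotient.mkₐ K (I + MxI n K ^ (k + 1)) (monomial α 1))
      {α | α ∉ diagOf I ∧ deg α ≤ k} := by
  rw [linearIndepOn_iff]
  intro l hl hl0
  by_contra hne
  obtain ⟨β, hβ, hmin⟩ :=
    l.support.exists_min_image fKey (Finsupp.support_nonempty_iff.2 hne)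
  set f := Finsupp.linearCombination K (fun α => (monomial α 1 : MvPowerSeries (Fin n) K)) l
    with hf
  have hcoeff : ∀ γ, coeff γ f = l γ := fun γ => by
    rw [hf, Finsupp.linearCombination_apply, Finsupp.sum, coeff_sum_smul_monomial]
    split_ifs with hγ
    · rfl
    · exact (Finsupp.notMem_support_iff.1 hγ).symm
  have hfJ : f ∈ I + MxI n K ^ (k + 1) := by
    rw [← Ideal.Quotient.eq_zero_iff_mem, ← Ideal.Quotient.mkₐ_eq_mk K]
    exact (Finsupp.apply_linearCombination K (Ideal.Quotient.mkₐ K _).toLinearMap _ l).trans hl0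
  have hinit : IsInitExp f β :=
    ⟨by rw [hcoeff]; exact Finsupp.mem_support_iff.1 hβ,
      fun γ hγ => hmin γ (Finsupp.mem_support_iff.2 (hcoeff γ ▸ hγ))⟩
  have hβs : β ∉ diagOf I ∧ deg β ≤ k := (Finsupp.mem_supported K l).1 hl hβ
  exact hβs.1 (mem_diagOf_of_isInitExp hfJ hinit hβs.2)

theorem mkₐ_monomial_mem_span_of_mem_diagOf {I J : Ideal (MvPowerSeries (Fin n) K)} {k : ℕ}
    (hIJ : I ≤ J) (hJ : MxI n K ^ (k + 1) ≤ J) {α : Fin n →₀ ℕ} (hα : α ∈ diagOf I) :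
    Ideal.Quotient.mkₐ K J (monomial α 1) ∈ Submodule.span K
      ((fun β => Ideal.Quotient.mkₐ K J (monomial β 1)) '' {β | deg β ≤ k ∧ fKey α < fKey β}) := by
  obtain ⟨g, hgI, -, hg⟩ := hα
  set h := monomial α 1 - (coeff α g)⁻¹ • g with hh
  have hmk : Ideal.Quotient.mkₐ K J (monomial α 1) = Ideal.Quotient.mkₐ K J h := by
    rw [Ideal.Quotient.mkₐ_eq_mk, Ideal.Quotient.mk_eq_mk_iff_sub_mem, hh, sub_sub_cancel]
    exact hIJ (Submodule.smul_of_tower_mem _ _ hgI)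
  have hkey : ∀ β, coeff β h ≠ 0 → fKey α < fKey β := by
    intro β hβ
    have hβα : β ≠ α := by
      rintro rfl
      exact hβ (by simp [hh, inv_mul_cancel₀ hg.1])
    have hgβ : coeff β g ≠ 0 := fun hgβ => hβ (by simp [hh, coeff_monomial_ne hβα, hgβ])
    exact (hg.2 β hgβ).lt_of_ne (fKey_injective.ne hβα.symm)
  rw [hmk, mkₐ_eq_sum_coeff_smul_mkₐ_monomial hJ h]
  refine Submodule.sum_mem _ fun β hβ => ?_
  by_cases hβ0 : coeff β h = 0
  · simp [hβ0]
  · exact Submodule.smul_mem _ _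
      (Submodule.subset_span ⟨β, ⟨(finite_setOf_deg_le k).mem_toFinset.1 hβ, hkey β hβ0⟩, rfl⟩)

theorem span_mkₐ_monomial_eq_top (I : Ideal (MvPowerSeries (Fin n) K)) (k : ℕ) :
    Submodule.span K ((fun α => Ideal.Quotient.mkₐ K (I + MxI n K ^ (k + 1)) (monomial α 1)) ''
      {α | α ∉ diagOf I ∧ deg α ≤ k}) = ⊤ := by
  set J := I + MxI n K ^ (k + 1)
  have hIJ : I ≤ J := le_sup_left
  have hJ : MxI n K ^ (k + 1) ≤ J := le_sup_right
  set S := Submodule.span K ((fun α => Ideal.Quotient.mkₐ K J (monomial α 1)) ''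
      {α | α ∉ diagOf I ∧ deg α ≤ k})
  have hmono : ∀ α ∈ {α | deg α ≤ k}, Ideal.Quotient.mkₐ K J (monomial α 1) ∈ S := by
    refine (finite_setOf_deg_le k).forall_of_forall_gt fKey fun α hα ih => ?_
    by_cases hdiag : α ∈ diagOf I
    · refine Submodule.span_le.2 ?_
        (mkₐ_monomial_mem_span_of_mem_diagOf hIJ hJ hdiag)
      rintro _ ⟨β, ⟨hβ, hαβ⟩, rfl⟩
      exact ih β hβ hαβ
    · exact Submodule.subset_span ⟨α, ⟨hdiag, hα⟩, rfl⟩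
  refine eq_top_iff.2 fun x _ => ?_
  obtain ⟨f, rfl⟩ := Ideal.Quotient.mkₐ_surjective K J x
  rw [mkₐ_eq_sum_coeff_smul_mkₐ_monomial hJ f]
  exact Submodule.sum_mem _ fun β hβ =>
    Submodule.smul_mem _ _ (hmono β ((finite_setOf_deg_le k).mem_toFinset.1 hβ))

end HilbertSamuel

theorem hilbert_samuel_eq_diagram_count_general {K : Type} [Field K] {n : ℕ}
    (I : Ideal (MvPowerSeries (Fin n) K)) (k : ℕ) :
    Module.finrank K
        (MvPowerSeries (Fin n) K ⧸ (I + MxI n K ^ (k + 1))) =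
      Nat.card {α : Fin n →₀ ℕ // α ∉ diagOf I ∧ deg α ≤ k} := by
  have hspan := span_mkₐ_monomial_eq_top I k
  rw [Set.image_eq_range] at hspan
  exact Module.finrank_eq_nat_card_basis
    (Module.Basis.mk (linearIndepOn_mkₐ_monomial I k) hspan.ge)

/-- **Hilbert–Samuel function via the diagram of initial exponents.** -/
theorem hilbert_samuel_eq_diagram_count {K : Type} [Field K] {n : ℕ}
    (I : Ideal (MvPowerSeries (Fin n) K)) (hI : I ≠ ⊥) (k : ℕ) :
    Module.finrank K
        (MvPowerSeries (Fin n) K ⧸ (I + MxI n K ^ (k + 1))) =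
      Nat.card {α : Fin n →₀ ℕ // α ∉ diagOf I ∧ deg α ≤ k} :=
  hilbert_samuel_eq_diagram_count_general I k
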